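/- Fatou's lemma for order integrals: Let (X, Ω, μ, E) be a measure space with Ω a σ-algebra and E σ-Dedekind complete. For any sequence (f_n) of measurable functions X → [0,∞], ∫ᵒ (liminf_n f_n) dμ ≤ ⋁_{n≥1} ⋀_{k≥n} ∫ᵒ f_k dμ in E̅. -/

import Mathlib

open MeasureTheory

/-- The action of `ℝ⁺` (as `ℝ≥0`) on `E̅⁺ ⊆ WithTop E`: `r • ∞ = ∞` for
`r > 0` and `0 • ∞ = 0`. -/
noncomputable def eSMul {E : Type*} [AddCommGroup E] [Module ℝ E]
    (r : NNReal) (x : WithTop E) : WithTop E :=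
  if r = 0 then 0 else x.map fun e => (r : ℝ) • e

/-- The order integral of a nonnegative elementary (finite-valued simple
measurable) function with respect to a set map `μ : Ω → E̅⁺`. -/
noncomputable def elemOInt {X : Type*} [MeasurableSpace X]
    {E : Type*} [AddCommGroup E] [Module ℝ E]
    (μ : Set X → WithTop E) (φ : SimpleFunc X NNReal) : WithTop E :=
  ∑ r ∈ φ.range, eSMul r (μ (⇑φ ⁻¹' {r}))

/-- `μ : Ω → E̅⁺` is an order-σ-additive `E̅⁺`-valued measure on the σ-algebra
of measurable sets. -/
def IsOMeasure {X : Type*} [MeasurableSpace X]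
    {E : Type*} [AddCommGroup E] [PartialOrder E] (μ : Set X → WithTop E) : Prop :=
  μ ∅ = 0 ∧ (∀ s : Set X, MeasurableSet s → 0 ≤ μ s) ∧
  ∀ Δ : ℕ → Set X, (∀ n, MeasurableSet (Δ n)) →
    (∀ m n, m ≠ n → Disjoint (Δ m) (Δ n)) →
    IsLUB (Set.range fun N => ∑ n ∈ Finset.range N, μ (Δ n)) (μ (⋃ n, Δ n))


/-- `I ∈ E̅⁺` is the order integral of the measurable function `f : X → [0,∞]`
with respect to `μ`: it is the supremum of the order integrals of some (hence,
by well-definedness, any) sequence of nonnegative elementary functions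
increasing pointwise to `f`. -/
def HasOInt {X : Type*} [MeasurableSpace X]
    {E : Type*} [AddCommGroup E] [PartialOrder E] [Module ℝ E]
    (μ : Set X → WithTop E) (f : X → ENNReal) (I : WithTop E) : Prop :=
  ∃ φ : ℕ → SimpleFunc X NNReal,
    (∀ x : X, Monotone fun n => φ n x) ∧
    (∀ x : X, (⨆ n, ((φ n x : ENNReal))) = f x) ∧
    IsLUB (Set.range fun n => elemOInt μ (φ n)) I

/-!
Approximate `J` from below by elementary integrals `∫ φ` with `φ ≤ liminf fₙ`. For `c < 1` the sets
`Bₖ = {c φ ≤ ⨅_{j ≥ k} f_j}` increase to `X`, so by σ-additivity `c ∫ φ` is the supremum of the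
integrals of `c φ` over `Bₖ`; each of these is at most `∫ f_j` for every `j ≥ k`, hence at most
`⋀_{j ≥ k} ∫ f_j`. Letting `c → 1` needs `E` to be Archimedean, which σ-Dedekind completeness
provides. The bound `∫_B φ ≤ ∫ f` for `φ ≤ f` on `B` is proved by the same exhaustion, run against
elementary functions increasing to `f`.
-/

open Set
open scoped NNReal ENNReal

def IsSigmaDedekindComplete (E : Type*) [Preorder E] : Prop :=
  ∀ S : Set E, S.Nonempty → S.Countable → BddAbove S → ∃ s, IsLUB S s

section OrderedGroup

variable {E : Type*} [AddCommGroup E] [PartialOrder E] [IsOrderedAddMonoid E]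

theorem IsSigmaDedekindComplete.nonpos_of_forall_nsmul_le (hE : IsSigmaDedekindComplete E)
    {a b : E} (h : ∀ n : ℕ, n • a ≤ b) : a ≤ 0 := by
  obtain ⟨s, hs⟩ := hE (range fun n : ℕ => n • a) (range_nonempty _) (countable_range _)
    ⟨b, forall_mem_range.2 h⟩
  have : s ≤ s - a := hs.2 <| forall_mem_range.2 fun n =>
    le_sub_iff_add_le.2 (succ_nsmul a n ▸ hs.1 (mem_range_self (n + 1)))
  simpa using this

theorem OrderIso.withTopCongr_addRight_apply (a : E) (x : WithTop E) :
    (OrderIso.addRight a).withTopCongr x = x + a := by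
  cases x <;> rfl

theorem isLUB_range_add_const {ι : Type*} [Nonempty ι] {u : ι → WithTop E} {s : WithTop E}
    (hu : IsLUB (range u) s) (a : WithTop E) : IsLUB (range fun i => u i + a) (s + a) := by
  induction a using WithTop.recTopCoe with
  | top => simp [range_const, isLUB_singleton]
  | coe a =>
    have := (OrderIso.addRight a).withTopCongr.isLUB_image'.2 hu
    simpa only [← range_comp, Function.comp_def, OrderIso.withTopCongr_addRight_apply] using this

theorem isLUB_range_add {u v : ℕ → WithTop E} {s t : WithTop E} (hu_mono : Monotone u)
    (hv_mono : Monotone v) (hu : IsLUB (range u) s) (hv : IsLUB (range v) t) :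
    IsLUB (range fun n => u n + v n) (s + t) := by
  refine ⟨forall_mem_range.2 fun n =>
    add_le_add (hu.1 (mem_range_self n)) (hv.1 (mem_range_self n)), fun w hw => ?_⟩
  have h_bound (m n : ℕ) : u n + v m ≤ w :=
    (add_le_add (hu_mono (le_max_left n m)) (hv_mono (le_max_right n m))).trans
      (hw (mem_range_self _))
  have h_left (m : ℕ) : v m + s ≤ w :=
    add_comm s (v m) ▸ (isLUB_range_add_const hu (v m)).2 (forall_mem_range.2 (h_bound m))
  exact add_comm t s ▸ (isLUB_range_add_const hv s).2 (forall_mem_range.2 h_left)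

theorem isLUB_range_finsetSum {ι : Type*} (S : Finset ι) {u : ι → ℕ → WithTop E}
    {s : ι → WithTop E} (hu_mono : ∀ i, Monotone (u i)) (hu : ∀ i, IsLUB (range (u i)) (s i)) :
    IsLUB (range fun n => ∑ i ∈ S, u i n) (∑ i ∈ S, s i) := by
  classical
  induction S using Finset.induction_on with
  | empty => simp [range_const, isLUB_singleton]
  | insert a S ha ih =>
    simp only [Finset.sum_insert ha]
    exact isLUB_range_add (hu_mono a) (fun m n hmn => Finset.sum_le_sum fun i _ => hu_mono i hmn)
      (hu a) ih

end OrderedGroup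

section ESMul

variable {E : Type*} [AddCommGroup E] [Module ℝ E]

@[simp] theorem eSMul_zero_left (x : WithTop E) : eSMul 0 x = 0 := if_pos rfl

@[simp] theorem eSMul_coe (r : ℝ≥0) (e : E) : eSMul r (e : WithTop E) = ((r : ℝ) • e : E) := by
  unfold eSMul
  split_ifs with hr
  · simp [hr]
  · rfl

@[simp] theorem eSMul_zero_right (r : ℝ≥0) : eSMul r (0 : WithTop E) = 0 := by
  rw [← WithTop.coe_zero, eSMul_coe, smul_zero]

theorem eSMul_top {r : ℝ≥0} (hr : r ≠ 0) : eSMul r (⊤ : WithTop E) = ⊤ := by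
  simp [eSMul, hr]

theorem eSMul_add (r : ℝ≥0) (x y : WithTop E) : eSMul r (x + y) = eSMul r x + eSMul r y := by
  rcases eq_or_ne r 0 with rfl | hr
  · simp
  induction x using WithTop.recTopCoe <;> induction y using WithTop.recTopCoe <;>
    simp [eSMul_top hr, ← WithTop.coe_add]

theorem eSMul_sum {ι : Type*} (r : ℝ≥0) (S : Finset ι) (x : ι → WithTop E) :
    eSMul r (∑ i ∈ S, x i) = ∑ i ∈ S, eSMul r (x i) :=
  map_sum (⟨⟨eSMul r, eSMul_zero_right r⟩, eSMul_add r⟩ : WithTop E →+ WithTop E) x S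

theorem eSMul_mul (c r : ℝ≥0) (x : WithTop E) : eSMul (c * r) x = eSMul c (eSMul r x) := by
  rcases eq_or_ne c 0 with rfl | hc
  · simp
  rcases eq_or_ne r 0 with rfl | hr
  · simp
  induction x using WithTop.recTopCoe
  · simp [eSMul_top, hc, hr]
  · simp [mul_smul]

variable [PartialOrder E] [PosSMulStrictMono ℝ E]

theorem eSMul_eq_withTopCongr_smulRight {r : ℝ≥0} (hr : 0 < r) :
    eSMul r = ⇑(OrderIso.smulRight (β := E) (NNReal.coe_pos.2 hr)).withTopCongr := by
  funext x
  rw [eSMul, if_neg hr.ne']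
  rfl

theorem eSMul_mono (r : ℝ≥0) : Monotone (eSMul (E := E) r) := by
  rcases eq_zero_or_pos r with rfl | hr
  · exact fun _ _ _ => by simp
  · rw [eSMul_eq_withTopCongr_smulRight hr]
    exact OrderIso.monotone _

theorem eSMul_nonneg (r : ℝ≥0) {x : WithTop E} (hx : 0 ≤ x) : 0 ≤ eSMul r x :=
  eSMul_zero_right (E := E) r ▸ eSMul_mono r hx

theorem isLUB_range_eSMul {ι : Type*} [Nonempty ι] (r : ℝ≥0) {u : ι → WithTop E}
    {s : WithTop E} (hu : IsLUB (range u) s) :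
    IsLUB (range fun i => eSMul r (u i)) (eSMul r s) := by
  rcases eq_zero_or_pos r with rfl | hr
  · simp [range_const, isLUB_singleton]
  · rw [eSMul_eq_withTopCongr_smulRight hr, ← Function.comp_def, range_comp]
    exact OrderIso.isLUB_image' _ |>.2 hu

variable [IsOrderedAddMonoid E]

theorem eSMul_le_eSMul_left {r s : ℝ≥0} (hrs : r ≤ s) {x : WithTop E} (hx : 0 ≤ x) :
    eSMul r x ≤ eSMul s x := by
  rcases eq_or_ne r 0 with rfl | hr
  · simpa using eSMul_nonneg s hx
  induction x using WithTop.recTopCoe with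
  | top => simp [eSMul_top hr, eSMul_top (hr.bot_lt.trans_le hrs).ne']
  | coe e =>
    simpa using smul_le_smul_of_nonneg_right (NNReal.coe_le_coe.2 hrs) (WithTop.coe_nonneg.1 hx)

theorem IsSigmaDedekindComplete.le_of_forall_lt_one_eSMul_le (hE : IsSigmaDedekindComplete E)
    {x y : WithTop E} (h : ∀ c : ℝ≥0, c < 1 → eSMul c x ≤ y) : x ≤ y := by
  induction x using WithTop.recTopCoe with
  | top => simpa [eSMul_top] using h (1 / 2) (by norm_num)
  | coe e =>
    induction y using WithTop.recTopCoe with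
    | top => exact le_top
    | coe i =>
      -- `c = n / (n + 1)` gives `n • e ≤ (n + 1) • i`
      have h_nsmul (n : ℕ) : n • (e - i) ≤ i := by
        have hn : (0 : ℝ) < n + 1 := by positivity
        have hc := WithTop.coe_le_coe.1 <| eSMul_coe (E := E) _ e ▸
          h (n / (n + 1)) ((div_lt_one (by positivity)).2 (lt_add_one _))
        have := smul_le_smul_of_nonneg_left hc hn.le
        rw [smul_smul, NNReal.coe_div, NNReal.coe_add, NNReal.coe_natCast, NNReal.coe_one,
          mul_div_cancel₀ _ hn.ne', add_smul, one_smul, Nat.cast_smul_eq_nsmul,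
          Nat.cast_smul_eq_nsmul] at this
        rw [nsmul_sub]
        exact sub_le_iff_le_add.2 (this.trans_eq (add_comm _ _))
      exact WithTop.coe_le_coe.2 (sub_nonpos.1 (hE.nonpos_of_forall_nsmul_le h_nsmul))

end ESMul

theorem MeasurableSpace.isSetRing_measurableSet (X : Type*) [MeasurableSpace X] :
    IsSetRing {s : Set X | MeasurableSet s} :=
  ⟨.empty, fun _ _ => .union, fun _ _ => .diff⟩

namespace IsOMeasure

variable {X : Type*} [MeasurableSpace X] {E : Type*} [AddCommGroup E] [PartialOrder E]
  [IsOrderedAddMonoid E] {μ : Set X → WithTop E}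

theorem union (hμ : IsOMeasure μ) {s t : Set X} (hs : MeasurableSet s) (ht : MeasurableSet t)
    (hst : Disjoint s t) : μ (s ∪ t) = μ s + μ t := by
  let Δ : ℕ → Set X := fun n => if n = 0 then s else if n = 1 then t else ∅
  have hΔ (n : ℕ) : MeasurableSet (Δ n) := by
    dsimp only [Δ]
    split_ifs <;> simp [hs, ht]
  have hΔ_disj (m n : ℕ) (hmn : m ≠ n) : Disjoint (Δ m) (Δ n) := by
    dsimp only [Δ]
    split_ifs <;> simp_all [hst.symm]
  have hΔ_union : ⋃ n, Δ n = s ∪ t := by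
    refine (iUnion_subset fun n => ?_).antisymm
      (union_subset (subset_iUnion Δ 0) (subset_iUnion Δ 1))
    dsimp only [Δ]
    split_ifs <;> simp
  have h_sum (N : ℕ) : ∑ n ∈ Finset.range N, μ (Δ n) ≤ μ s + μ t :=
    calc ∑ n ∈ Finset.range N, μ (Δ n) = ∑ n ∈ Finset.range (min N 2), μ (Δ n) := by
          refine (Finset.sum_subset (Finset.range_subset_range.2 (min_le_left _ _))
            fun n hN h2 => ?_).symm
          simp only [Finset.mem_range] at hN h2
          simp [Δ, show n ≠ 0 by omega, show n ≠ 1 by omega, hμ.1]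
      _ ≤ ∑ n ∈ Finset.range 2, μ (Δ n) :=
          Finset.sum_le_sum_of_subset_of_nonneg
            (Finset.range_subset_range.2 (min_le_right _ _)) fun n _ _ => hμ.2.1 _ (hΔ n)
      _ = μ s + μ t := by simp [Finset.sum_range_succ, Δ]
  have hlub := hμ.2.2 Δ hΔ hΔ_disj
  rw [hΔ_union] at hlub
  refine le_antisymm (hlub.2 (forall_mem_range.2 h_sum)) ?_
  simpa [Finset.sum_range_succ, Δ] using hlub.1 (mem_range_self 2)

def toAddContent (hμ : IsOMeasure μ) : AddContent (WithTop E) {s : Set X | MeasurableSet s} :=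
  (MeasurableSpace.isSetRing_measurableSet X).addContent_of_union μ hμ.1 hμ.union

theorem mono (hμ : IsOMeasure μ) {s t : Set X} (hs : MeasurableSet s) (ht : MeasurableSet t)
    (hst : s ⊆ t) : μ s ≤ μ t := by
  rw [← union_sdiff_cancel hst, hμ.union hs (ht.diff hs) disjoint_sdiff_right]
  exact le_add_of_nonneg_right (hμ.2.1 _ (ht.diff hs))

theorem biUnion_finset (hμ : IsOMeasure μ) {ι : Type*} {S : Finset ι} {s : ι → Set X}
    (hs : ∀ i ∈ S, MeasurableSet (s i)) (hS : (S : Set ι).PairwiseDisjoint s) :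
    μ (⋃ i ∈ S, s i) = ∑ i ∈ S, μ (s i) :=
  addContent_biUnion_eq (m := hμ.toAddContent) (MeasurableSpace.isSetRing_measurableSet X) hs hS

theorem isLUB_range_of_monotone (hμ : IsOMeasure μ) {s : ℕ → Set X}
    (hs : ∀ n, MeasurableSet (s n)) (hs_mono : Monotone s) :
    IsLUB (range fun n => μ (s n)) (μ (⋃ n, s n)) := by
  have hlub := hμ.2.2 _ (MeasurableSet.disjointed hs) fun _ _ => (disjoint_disjointed s ·)
  rw [iUnion_disjointed] at hlub
  have h_partial (n : ℕ) : ∑ i ∈ Finset.range (n + 1), μ (disjointed s i) = μ (s n) := by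
    have := addContent_accumulate hμ.toAddContent (MeasurableSpace.isSetRing_measurableSet X)
      (disjoint_disjointed s) (MeasurableSet.disjointed hs) n
    rw [← partialSups_eq_accumulate, partialSups_disjointed, hs_mono.partialSups_eq] at this
    exact this.symm
  refine ⟨forall_mem_range.2 fun n => h_partial n ▸ hlub.1 (mem_range_self _),
    fun w hw => hlub.2 (forall_mem_range.2 fun N => ?_)⟩
  cases N with
  | zero => simpa using (hμ.2.1 _ (hs 0)).trans (hw (mem_range_self 0))
  | succ n => exact h_partial n ▸ hw (mem_range_self n)

end IsOMeasure

section ElemOIntOn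

variable {X : Type*} [MeasurableSpace X] {E : Type*} [AddCommGroup E] [Module ℝ E]

noncomputable def elemOIntOn (μ : Set X → WithTop E) (φ : SimpleFunc X ℝ≥0) (B : Set X) :
    WithTop E :=
  ∑ r ∈ φ.range, eSMul r (μ (φ ⁻¹' {r} ∩ B))

@[simp] theorem elemOIntOn_univ (μ : Set X → WithTop E) (φ : SimpleFunc X ℝ≥0) :
    elemOIntOn μ φ univ = elemOInt μ φ := by
  simp [elemOIntOn, elemOInt]

variable [PartialOrder E] [IsOrderedAddMonoid E] {μ : Set X → WithTop E}

theorem elemOIntOn_map (hμ : IsOMeasure μ) {γ : Type*} (θ : SimpleFunc X γ) (h : γ → ℝ≥0)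
    {B : Set X} (hB : MeasurableSet B) :
    elemOIntOn μ (θ.map h) B = ∑ t ∈ θ.range, eSMul (h t) (μ (θ ⁻¹' {t} ∩ B)) := by
  classical
  rw [elemOIntOn, SimpleFunc.range_map]
  refine Finset.sum_image' _ fun t _ => ?_
  have h_fiber : θ.map h ⁻¹' {h t} ∩ B = ⋃ j ∈ θ.range.filter (h · = h t), θ ⁻¹' {j} ∩ B := by
    ext x
    simp
  rw [h_fiber, hμ.biUnion_finset (fun j _ => (θ.measurableSet_fiber j).inter hB)
    ((pairwiseDisjoint_fiber θ _).mono fun _ => inter_subset_left), eSMul_sum]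
  exact Finset.sum_congr rfl fun j hj => by rw [(Finset.mem_filter.1 hj).2]

theorem eSMul_elemOIntOn (hμ : IsOMeasure μ) (c : ℝ≥0) (φ : SimpleFunc X ℝ≥0) {B : Set X}
    (hB : MeasurableSet B) : eSMul c (elemOIntOn μ φ B) = elemOIntOn μ (φ.map (c * ·)) B := by
  rw [elemOIntOn_map hμ φ _ hB, elemOIntOn, eSMul_sum]
  simp only [eSMul_mul]

variable [PosSMulStrictMono ℝ E]

theorem elemOIntOn_mono_fun (hμ : IsOMeasure μ) {φ ψ : SimpleFunc X ℝ≥0} {B : Set X}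
    (hB : MeasurableSet B) (h : ∀ x ∈ B, φ x ≤ ψ x) :
    elemOIntOn μ φ B ≤ elemOIntOn μ ψ B := by
  let θ := φ.pair ψ
  have hφ : φ = θ.map Prod.fst := SimpleFunc.ext fun _ => rfl
  have hψ : ψ = θ.map Prod.snd := SimpleFunc.ext fun _ => rfl
  rw [hφ, hψ, elemOIntOn_map hμ _ _ hB, elemOIntOn_map hμ _ _ hB]
  refine Finset.sum_le_sum fun p _ => ?_
  rcases (θ ⁻¹' {p} ∩ B).eq_empty_or_nonempty with hempty | ⟨x, hxp, hxB⟩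
  · simp [hempty, hμ.1]
  · obtain rfl : (φ x, ψ x) = p := hxp
    exact eSMul_le_eSMul_left (h x hxB) (hμ.2.1 _ ((θ.measurableSet_fiber _).inter hB))

theorem elemOIntOn_mono_set (hμ : IsOMeasure μ) (φ : SimpleFunc X ℝ≥0) {B C : Set X}
    (hB : MeasurableSet B) (hC : MeasurableSet C) (hBC : B ⊆ C) :
    elemOIntOn μ φ B ≤ elemOIntOn μ φ C :=
  Finset.sum_le_sum fun r _ => eSMul_mono r <| hμ.mono ((φ.measurableSet_fiber r).inter hB)
    ((φ.measurableSet_fiber r).inter hC) (inter_subset_inter_right _ hBC)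

theorem isLUB_range_elemOIntOn (hμ : IsOMeasure μ) (φ : SimpleFunc X ℝ≥0) {B : ℕ → Set X}
    (hB : ∀ n, MeasurableSet (B n)) (hB_mono : Monotone B) :
    IsLUB (range fun n => elemOIntOn μ φ (B n)) (elemOIntOn μ φ (⋃ n, B n)) := by
  have h_meas (r : ℝ≥0) (n : ℕ) : MeasurableSet (φ ⁻¹' {r} ∩ B n) :=
    (φ.measurableSet_fiber r).inter (hB n)
  have h_mono (r : ℝ≥0) : Monotone fun n => φ ⁻¹' {r} ∩ B n :=
    fun _ _ hmn => inter_subset_inter_right _ (hB_mono hmn)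
  simp only [elemOIntOn, inter_iUnion]
  exact isLUB_range_finsetSum _
    (fun r _ _ hmn => eSMul_mono r (hμ.mono (h_meas r _) (h_meas r _) (h_mono r hmn)))
    fun r => isLUB_range_eSMul r (hμ.isLUB_range_of_monotone (h_meas r) (h_mono r))

end ElemOIntOn

section Fatou

variable {X : Type*} [MeasurableSpace X] {E : Type*} [AddCommGroup E] [PartialOrder E]
  [IsOrderedAddMonoid E] [Module ℝ E] [PosSMulStrictMono ℝ E] {μ : Set X → WithTop E}

theorem elemOIntOn_le_of_le_iSup (hE : IsSigmaDedekindComplete E) (hμ : IsOMeasure μ)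
    (φ : SimpleFunc X ℝ≥0) {B : Set X} (hB : MeasurableSet B) {u : ℕ → X → ℝ≥0∞}
    (hu : ∀ k, Measurable (u k)) (hu_mono : Monotone u) (hφ : ∀ x ∈ B, (φ x : ℝ≥0∞) ≤ ⨆ k, u k x)
    {y : WithTop E} (hy : ∀ k (ψ : SimpleFunc X ℝ≥0) (C : Set X), MeasurableSet C →
      (∀ x ∈ C, (ψ x : ℝ≥0∞) ≤ u k x) → elemOIntOn μ ψ C ≤ y) :
    elemOIntOn μ φ B ≤ y := by
  refine hE.le_of_forall_lt_one_eSMul_le fun c hc => ?_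
  let ψ := φ.map (c * ·)
  let C : ℕ → Set X := fun k => B ∩ {x | (ψ x : ℝ≥0∞) ≤ u k x}
  have hC (k : ℕ) : MeasurableSet (C k) :=
    hB.inter (measurableSet_le ψ.measurable.coe_nnreal_ennreal (hu k))
  have hC_mono : Monotone C := fun k l hkl =>
    inter_subset_inter_right _ fun x hx => hx.trans (hu_mono hkl x)
  have hC_iUnion : ⋃ k, C k = B := by
    refine (iUnion_subset fun k => inter_subset_left).antisymm fun x hx => mem_iUnion.2 ?_
    rcases eq_zero_or_pos (φ x) with h0 | hpos
    · exact ⟨0, hx, by simp [ψ, h0]⟩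
    · have : (ψ x : ℝ≥0∞) < ⨆ k, u k x :=
        (ENNReal.coe_lt_coe.2 (mul_lt_of_lt_one_left hpos hc)).trans_le (hφ x hx)
      obtain ⟨k, hk⟩ := lt_iSup_iff.1 this
      exact ⟨k, hx, hk.le⟩
  rw [eSMul_elemOIntOn hμ c φ hB, ← hC_iUnion]
  exact (isLUB_range_elemOIntOn hμ ψ hC hC_mono).2 <|
    forall_mem_range.2 fun k => hy k ψ (C k) (hC k) fun x hx => hx.2

theorem HasOInt.elemOIntOn_le (hE : IsSigmaDedekindComplete E) (hμ : IsOMeasure μ)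
    {f : X → ℝ≥0∞} {I : WithTop E} (hI : HasOInt μ f I) {φ : SimpleFunc X ℝ≥0} {B : Set X}
    (hB : MeasurableSet B) (hφ : ∀ x ∈ B, (φ x : ℝ≥0∞) ≤ f x) : elemOIntOn μ φ B ≤ I := by
  obtain ⟨χ, hχ_mono, hχ_iSup, hχ_lub⟩ := hI
  refine elemOIntOn_le_of_le_iSup hE hμ φ hB (u := fun k x => χ k x)
    (fun k => (χ k).measurable.coe_nnreal_ennreal)
    (fun k l hkl x => ENNReal.coe_le_coe.2 (hχ_mono x hkl))
    (fun x hx => (hχ_iSup x).symm ▸ hφ x hx) fun k ψ C hC hψ => ?_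
  calc elemOIntOn μ ψ C
      ≤ elemOIntOn μ (χ k) C := elemOIntOn_mono_fun hμ hC fun x hx => ENNReal.coe_le_coe.1 (hψ x hx)
    _ ≤ elemOIntOn μ (χ k) univ := elemOIntOn_mono_set hμ _ hC .univ (subset_univ C)
    _ = elemOInt μ (χ k) := elemOIntOn_univ μ (χ k)
    _ ≤ I := hχ_lub.1 (mem_range_self k)

end Fatou

/-- Fatou's lemma for order integrals: for a sequence `(f_n)` of measurable
`[0,∞]`-valued functions, with `E` σ-Dedekind complete,
`∫ᵒ (liminf f_n) dμ ≤ ⋁_n ⋀_{k≥n} ∫ᵒ f_k dμ` in `E̅`. -/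
theorem order_integral_fatou
    {X : Type*} [MeasurableSpace X]
    {E : Type*} [AddCommGroup E] [PartialOrder E] [IsOrderedAddMonoid E] [Module ℝ E]
    [PosSMulStrictMono ℝ E]
    (hσ : ∀ S : Set E, S.Nonempty → S.Countable → BddAbove S → ∃ s, IsLUB S s)
    (μ : Set X → WithTop E) (hμ : IsOMeasure μ)
    (f : ℕ → X → ENNReal) (hf : ∀ n, Measurable (f n))
    (I : ℕ → WithTop E) (hI : ∀ n, HasOInt μ (f n) (I n))
    (J : WithTop E)
    (hJ : HasOInt μ (fun x => Filter.liminf (fun n => f n x) Filter.atTop) J)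
    (g : ℕ → WithTop E)
    (hg : ∀ n, IsGLB {y : WithTop E | ∃ k, n ≤ k ∧ y = I k} (g n))
    (b : WithTop E) (hb : IsLUB (Set.range g) b) :
    J ≤ b := by
  obtain ⟨ψ, -, hψ_iSup, hψ_lub⟩ := hJ
  refine hψ_lub.2 (forall_mem_range.2 fun m => ?_)
  rw [← elemOIntOn_univ]
  refine elemOIntOn_le_of_le_iSup hσ hμ (ψ m) .univ (u := fun k x => ⨅ j ≥ k, f j x)
    (fun k => .iInf fun j => .iInf fun _ => hf j)
    (fun k l hkl x => le_iInf₂ fun j hj => iInf₂_le j (hkl.trans hj))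
    (fun x _ => ?_) fun k χ C hC hχ => ?_
  · rw [← Filter.liminf_eq_iSup_iInf_of_nat]
    exact (le_iSup (fun n => (ψ n x : ℝ≥0∞)) m).trans_eq (hψ_iSup x)
  · calc elemOIntOn μ χ C
        ≤ g k := (hg k).2 fun _ ⟨j, hkj, hj⟩ => hj ▸
          (hI j).elemOIntOn_le hσ hμ hC fun x hx => (hχ x hx).trans (iInf₂_le j hkj)
      _ ≤ b := hb.1 (mem_range_self k)
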